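/- Let H be a Hilbert space, D ⊆ H a subspace, and S : D → H a linear map such that ‖v‖ ≤ C‖S v‖ for all v ∈ D with constant C > 0. Then for every f ∈ H there exists u ∈ H with ‖u‖ ≤ C‖f‖ such that ⟨S v, u⟩ = ⟨v, f⟩ for all v ∈ D. -/

import Mathlib

/-!
A functional `g` on the domain with `‖g v‖ ≤ c ‖S v‖` vanishes on `ker S`, hence factors through
`range S` as a functional of norm at most `c`. Hahn–Banach extends it to the whole space without
increasing the norm, and the Riesz representation turns the extension into a vector `u` with
`‖u‖ ≤ c`. Applied to `g = ⟪f, ·⟫`, whose bound `C ‖f‖` comes from the a priori estimate, this gives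
the solution of `S* u = f` in the weak sense.
-/

open LinearMap

section

variable {𝕜 M : Type*} [RCLike 𝕜] [AddCommGroup M] [Module 𝕜 M]

theorem LinearMap.exists_strongDual_comp_eq_of_norm_le {F : Type*} [NormedAddCommGroup F]
    [NormedSpace 𝕜 F] (S : M →ₗ[𝕜] F) (g : M →ₗ[𝕜] 𝕜) {c : ℝ} (hc : 0 ≤ c)
    (hg : ∀ v, ‖g v‖ ≤ c * ‖S v‖) :
    ∃ G : StrongDual 𝕜 F, ‖G‖ ≤ c ∧ ∀ v, G (S v) = g v := by
  have hker : ker S ≤ ker g := fun v hv => by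
    simpa [mem_ker.mp hv] using hg v
  let L : range S →ₗ[𝕜] 𝕜 := (ker S).liftQ g hker ∘ₗ S.quotKerEquivRange.symm
  have hL : ∀ v, L ⟨S v, mem_range_self S v⟩ = g v := fun v => by
    simp [L, quotKerEquivRange_symm_apply_image]
  have hbound : ∀ w, ‖L w‖ ≤ c * ‖w‖ := by
    rintro ⟨_, v, rfl⟩
    rw [hL]
    exact hg v
  obtain ⟨G, hGS, hGnorm⟩ := exists_extension_norm_eq (range S) (L.mkContinuous c hbound)
  exact ⟨G, hGnorm ▸ LinearMap.mkContinuous_norm_le _ hc _,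
    fun v => (hGS ⟨S v, mem_range_self S v⟩).trans (hL v)⟩

theorem LinearMap.exists_inner_comp_eq_of_norm_le {E : Type*} [NormedAddCommGroup E]
    [InnerProductSpace 𝕜 E] [CompleteSpace E] (S : M →ₗ[𝕜] E) (g : M →ₗ[𝕜] 𝕜) {c : ℝ}
    (hc : 0 ≤ c) (hg : ∀ v, ‖g v‖ ≤ c * ‖S v‖) :
    ∃ u : E, ‖u‖ ≤ c ∧ ∀ v, inner 𝕜 u (S v) = g v := by
  obtain ⟨G, hGnorm, hGS⟩ := S.exists_strongDual_comp_eq_of_norm_le g hc hg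
  refine ⟨(InnerProductSpace.toDual 𝕜 E).symm G, ?_, fun v => ?_⟩
  · rwa [LinearIsometryEquiv.norm_map]
  · rw [InnerProductSpace.toDual_symm_apply, hGS]

end

/-- Let H be a (complex) Hilbert space, D ⊆ H a subspace, S : D → H linear
with ‖v‖ ≤ C‖Sv‖ for all v ∈ D, C > 0. Then for every f ∈ H there is u ∈ H with
‖u‖ ≤ C‖f‖ and ⟨Sv, u⟩ = ⟨v, f⟩ for all v ∈ D. -/
theorem statement4 {H : Type*} [NormedAddCommGroup H] [InnerProductSpace ℂ H]
    [CompleteSpace H] (D : Submodule ℂ H) (S : D →ₗ[ℂ] H) (C : ℝ) (hC : 0 < C)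
    (hest : ∀ v : D, ‖(v : H)‖ ≤ C * ‖S v‖) (f : H) :
    ∃ u : H, ‖u‖ ≤ C * ‖f‖ ∧
      ∀ v : D, (inner ℂ (S v) u : ℂ) = (inner ℂ (v : H) f : ℂ) := by
  have hbound : ∀ v : D, ‖inner ℂ f (v : H)‖ ≤ C * ‖f‖ * ‖S v‖ := fun v =>
    calc ‖inner ℂ f (v : H)‖ ≤ ‖f‖ * ‖(v : H)‖ := norm_inner_le_norm f (v : H)
      _ ≤ ‖f‖ * (C * ‖S v‖) := by gcongr; exact hest v
      _ = C * ‖f‖ * ‖S v‖ := by ring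
  obtain ⟨u, hu, hSu⟩ := S.exists_inner_comp_eq_of_norm_le
    ((innerSL ℂ f).toLinearMap ∘ₗ D.subtype) (by positivity) hbound
  refine ⟨u, hu, fun v => ?_⟩
  rw [← inner_conj_symm, hSu v, ← inner_conj_symm (v : H)]
  rfl
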